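/- arXiv:1910.09016 — 6 statements merged into one kernel-verified Lean document; each statement's English description precedes it below -/
import Mathlib

section
/- Let Q = a·z1² + 2b·z1z2 + c·z2² be a nonzero quadratic form in the skew polynomial algebra S on two generators (so (a,b,c) ≠ (0,0,0)). Then Q factors in at most two distinct ways up to scalar: if Q = L1·L2 = L3·L4 = L5·L6 in S with L1,...,L6 degree-one elements, then there exist distinct indices i, j ∈ {1,2,3} and λ ∈ k^× such that the j-th pair of factors equals (λ·L, λ⁻¹·L′), where (L, L′) is the i-th pair of factors. -/
/-!
If `L·L' = Q` with `L = p₁z₁ + p₂z₂`, eliminating `L'` from the coefficient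
equations shows that `(p₁ : p₂)` is a zero of the binary quadratic form
`c X² - 2b XY + μa Y²`, which is nonzero when `Q` is. A nonzero binary quadratic form has at
most two zeros on the projective line, so among three factorizations two first factors are
proportional, `L_j = λ L_i`. Left multiplication by a nonzero linear form is injective in `S`,
so `L'_j = λ⁻¹ L'_i`.
-/

/-- In the skew polynomial algebra `S` on two generators `z1, z2` (with relation
`z2*z1 = μ*z1*z2`), the equality `Q = L·L'` for the quadratic form
`Q = a·z1² + 2b·z1z2 + c·z2²` and degree-one elements `L = L.1·z1 + L.2·z2`,
`L' = L'.1·z1 + L'.2·z2` holds iff these coefficient equations hold. -/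
def IsFactorization {k : Type*} [Field k] (μ a b c : k) (L L' : k × k) : Prop :=
  L.1 * L'.1 = a ∧ L.1 * L'.2 + μ * L.2 * L'.1 = 2 * b ∧ L.2 * L'.2 = c

section

variable {k : Type*} [Field k]

theorem binaryQuadratic_eq_zero_of_three_independent_roots {A B C : k} {p q r : k × k}
    (hp : A * p.1 ^ 2 + B * p.1 * p.2 + C * p.2 ^ 2 = 0)
    (hq : A * q.1 ^ 2 + B * q.1 * q.2 + C * q.2 ^ 2 = 0)
    (hr : A * r.1 ^ 2 + B * r.1 * r.2 + C * r.2 ^ 2 = 0)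
    (hpq : p.1 * q.2 ≠ p.2 * q.1) (hpr : p.1 * r.2 ≠ p.2 * r.1)
    (hqr : q.1 * r.2 ≠ q.2 * r.1) :
    A = 0 ∧ B = 0 ∧ C = 0 := by
  set dpq := p.1 * q.2 - p.2 * q.1
  set dpr := p.1 * r.2 - p.2 * r.1
  set dqr := q.1 * r.2 - q.2 * r.1
  have hdet : dpq * dpr * dqr ≠ 0 :=
    mul_ne_zero (mul_ne_zero (sub_ne_zero.2 hpq) (sub_ne_zero.2 hpr)) (sub_ne_zero.2 hqr)
  -- Cramer's rule for the matrix with rows `(x², xy, y²)`, whose determinant is `dpq dpr dqr`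
  refine ⟨?_, ?_, ?_⟩ <;> refine (mul_eq_zero.1 ?_).resolve_left hdet
  · linear_combination q.2 * r.2 * dqr * hp - p.2 * r.2 * dpr * hq + p.2 * q.2 * dpq * hr
  · linear_combination -(dqr * (q.1 * r.2 + r.1 * q.2)) * hp
      + dpr * (p.1 * r.2 + r.1 * p.2) * hq - dpq * (p.1 * q.2 + q.1 * p.2) * hr
  · linear_combination q.1 * r.1 * dqr * hp - p.1 * r.1 * dpr * hq + p.1 * q.1 * dpq * hr

theorem exists_eq_smul_of_mul_eq_mul {L M : k × k} (hL : L ≠ 0) (h : L.1 * M.2 = L.2 * M.1) :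
    ∃ t : k, M = t • L := by
  by_cases h1 : L.1 = 0
  · have h2 : L.2 ≠ 0 := fun h2 => hL (Prod.ext h1 h2)
    refine ⟨M.2 / L.2, Prod.ext ?_ ?_⟩
    · have hM1 : M.1 = 0 := by simpa [h1, h2] using h
      simp [h1, hM1]
    · simp [h2]
  · refine ⟨M.1 / L.1, Prod.ext ?_ ?_⟩
    · simp [h1]
    · simp only [Prod.smul_snd, smul_eq_mul]
      field_simp
      linear_combination h

namespace IsFactorization

variable {μ a b c : k} {L L' : k × k}

theorem binaryForm_eq_zero (h : IsFactorization μ a b c L L') :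
    c * L.1 ^ 2 + (-2 * b) * L.1 * L.2 + μ * a * L.2 ^ 2 = 0 := by
  obtain ⟨ha, hb, hc⟩ := h
  linear_combination -L.1 ^ 2 * hc + L.1 * L.2 * hb - μ * L.2 ^ 2 * ha

theorem fst_ne_zero (h2 : (2 : k) ≠ 0) (hQ : (a, b, c) ≠ (0, 0, 0))
    (h : IsFactorization μ a b c L L') : L ≠ 0 := by
  rintro rfl
  obtain ⟨ha, hb, hc⟩ := h
  simp only [Prod.fst_zero, Prod.snd_zero, zero_mul, mul_zero, add_zero] at ha hb hc
  exact hQ (by simp [← ha, ← hc, (mul_eq_zero.1 hb.symm).resolve_left h2])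

theorem smul (t : k) (ht : t ≠ 0) (h : IsFactorization μ a b c L L') :
    IsFactorization μ a b c (t • L) (t⁻¹ • L') := by
  obtain ⟨ha, hb, hc⟩ := h
  refine ⟨?_, ?_, ?_⟩ <;> simp only [Prod.smul_fst, Prod.smul_snd, smul_eq_mul] <;> field_simp
  · exact ha
  · linear_combination hb
  · exact hc

/-- Left multiplication by a nonzero degree-one element is injective in `S`. -/
theorem snd_unique (hμ : μ ≠ 0) (hL : L ≠ 0) {L'' : k × k}
    (h : IsFactorization μ a b c L L') (h' : IsFactorization μ a b c L L'') : L' = L'' := by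
  obtain ⟨ha, hb, hc⟩ := h
  obtain ⟨ha', hb', hc'⟩ := h'
  by_cases h1 : L.1 = 0
  · have h2 : L.2 ≠ 0 := fun h2 => hL (Prod.ext h1 h2)
    have e2 : L'.2 = L''.2 := mul_left_cancel₀ h2 (hc.trans hc'.symm)
    refine Prod.ext (mul_left_cancel₀ (mul_ne_zero hμ h2) ?_) e2
    linear_combination hb - hb' - L.1 * e2
  · have e1 : L'.1 = L''.1 := mul_left_cancel₀ h1 (ha.trans ha'.symm)
    refine Prod.ext e1 (mul_left_cancel₀ h1 ?_)
    linear_combination hb - hb' - μ * L.2 * e1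

end IsFactorization

end

theorem atMostTwoFactorizations_general {k : Type*} [Field k]
    (h2 : (2 : k) ≠ 0) (μ : k) (hμ : μ ≠ 0) (a b c : k)
    (hQ : (a, b, c) ≠ (0, 0, 0))
    (P : Fin 3 → (k × k) × (k × k))
    (hP : ∀ i, IsFactorization μ a b c (P i).1 (P i).2) :
    ∃ i j : Fin 3, i ≠ j ∧ ∃ lam : k, lam ≠ 0 ∧
      (P j).1 = lam • (P i).1 ∧ (P j).2 = lam⁻¹ • (P i).2 := by
  have hL : ∀ i, (P i).1 ≠ 0 := fun i => (hP i).fst_ne_zero h2 hQ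
  obtain ⟨i, j, hij, hprop⟩ :
      ∃ i j : Fin 3, i ≠ j ∧ (P i).1.1 * (P j).1.2 = (P i).1.2 * (P j).1.1 := by
    by_contra! hind
    obtain ⟨hc, hb, ha⟩ := binaryQuadratic_eq_zero_of_three_independent_roots
      (hP 0).binaryForm_eq_zero (hP 1).binaryForm_eq_zero (hP 2).binaryForm_eq_zero
      (hind 0 1 (by decide)) (hind 0 2 (by decide)) (hind 1 2 (by decide))
    apply hQ
    simp [hc, (mul_eq_zero.1 ha).resolve_left hμ,
      (mul_eq_zero.1 hb).resolve_left (neg_ne_zero.2 h2)]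
  obtain ⟨t, ht⟩ := exists_eq_smul_of_mul_eq_mul (hL i) hprop
  have ht0 : t ≠ 0 := by
    rintro rfl
    exact hL j (by simpa using ht)
  refine ⟨i, j, hij, t, ht0, ht, ?_⟩
  refine IsFactorization.snd_unique hμ (smul_ne_zero ht0 (hL i)) ?_ ((hP i).smul t ht0)
  exact ht ▸ hP j

/-- A nonzero quadratic form on two generators factors in at most two distinct
ways up to scalar: among any three factorizations, two of them agree up to
rescaling the factors by `λ` and `λ⁻¹`. -/
theorem atMostTwoFactorizations {k : Type*} [Field k] [IsAlgClosed k]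
    (h2 : (2 : k) ≠ 0) (μ : k) (hμ : μ ≠ 0) (a b c : k)
    (hQ : (a, b, c) ≠ (0, 0, 0))
    (P : Fin 3 → (k × k) × (k × k))
    (hP : ∀ i, IsFactorization μ a b c (P i).1 (P i).2) :
    ∃ i j : Fin 3, i ≠ j ∧ ∃ lam : k, lam ≠ 0 ∧
      (P j).1 = lam • (P i).1 ∧ (P j).2 = lam⁻¹ • (P i).2 :=
  atMostTwoFactorizations_general h2 μ hμ a b c hQ P hP
end

section
/- A quadratic form on two generators is a perfect square exactly when its μ-determinant vanishes: there exists a degree-one element L in S with Q = L·L (equivalently, there exist p1, p2 ∈ k with p1² = a, (1+μ)·p1p2 = 2b, and p2² = c) if and only if 4b² − (1+μ)²·ac = 0. -/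
/-!
Squaring `(1 + μ) p1 p2 = 2b` gives `4b² = (1 + μ)² a c`, whatever the square roots `p1`, `p2`
of `a`, `c`. Conversely, over an algebraically closed field take any square roots `p1`, `q` of
`a`, `c`: the vanishing determinant says `((1 + μ) p1 q)² = (2b)²`, so `(1 + μ) p1 q = ± 2b`,
and `p2 = ± q` repairs the sign.
-/

theorem exists_mul_eq_and_sq_eq_of_sq_eq {R : Type*} [CommRing R] [NoZeroDivisors R]
    {x c d : R} (hc : IsSquare c) (h : d ^ 2 = x ^ 2 * c) : ∃ y, x * y = d ∧ y ^ 2 = c := by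
  obtain ⟨q, rfl⟩ := hc
  have hsq : (x * q) ^ 2 = d ^ 2 := by rw [h]; ring
  rcases sq_eq_sq_iff_eq_or_eq_neg.mp hsq with hxq | hxq
  · exact ⟨q, hxq, by ring⟩
  · exact ⟨-q, by rw [mul_neg, hxq, neg_neg], by ring⟩

theorem exists_sq_eq_and_mul_eq_and_sq_eq_iff {R : Type*} [CommRing R] [NoZeroDivisors R]
    {a c : R} (ha : IsSquare a) (hc : IsSquare c) (s d : R) :
    (∃ p1 p2 : R, p1 ^ 2 = a ∧ s * p1 * p2 = d ∧ p2 ^ 2 = c) ↔ d ^ 2 = s ^ 2 * a * c := by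
  constructor
  · rintro ⟨p1, p2, rfl, rfl, rfl⟩
    ring
  · intro h
    obtain ⟨p1, rfl⟩ := ha
    obtain ⟨p2, hd, hp2⟩ := exists_mul_eq_and_sq_eq_of_sq_eq (x := s * p1) hc (by rw [h]; ring)
    exact ⟨p1, p2, by ring, hd, hp2⟩

theorem perfectSquare_iff_muDet_eq_zero_general {k : Type*} [Field k] [IsAlgClosed k]
    (μ : k) (a b c : k) :
    (∃ p1 p2 : k, p1 ^ 2 = a ∧ (1 + μ) * p1 * p2 = 2 * b ∧ p2 ^ 2 = c) ↔
      4 * b ^ 2 - (1 + μ) ^ 2 * a * c = 0 := by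
  rw [exists_sq_eq_and_mul_eq_and_sq_eq_iff (IsAlgClosed.exists_eq_mul_self a)
    (IsAlgClosed.exists_eq_mul_self c), sub_eq_zero, mul_pow]
  norm_num

/-- A quadratic form `Q = a·z1² + 2b·z1z2 + c·z2²` on two generators of the skew
polynomial algebra `S` (relation `z2*z1 = μ*z1*z2`) is a perfect square
`Q = L·L` with `L = p1·z1 + p2·z2` (equivalently `p1² = a`,
`(1+μ)·p1·p2 = 2b`, `p2² = c`) if and only if its μ-determinant
`D(M) = 4b² − (1+μ)²·ac` vanishes. -/
theorem perfectSquare_iff_muDet_eq_zero {k : Type*} [Field k] [IsAlgClosed k]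
    (h2 : (2 : k) ≠ 0) (μ : k) (hμ : μ ≠ 0) (a b c : k) :
    (∃ p1 p2 : k, p1 ^ 2 = a ∧ (1 + μ) * p1 * p2 = 2 * b ∧ p2 ^ 2 = c) ↔
      4 * b ^ 2 - (1 + μ) ^ 2 * a * c = 0 :=
  perfectSquare_iff_muDet_eq_zero_general μ a b c
end

section
/- Let Q = a·z1² + 2b·z1z2 + c·z2² be a nonzero quadratic form in S (so (a,b,c) ≠ (0,0,0)). Then Q factors uniquely up to a nonzero scalar multiple — i.e., for any two factorizations Q = L1·L2 = L3·L4 with L1, L2, L3, L4 degree-one elements of S, there exists λ ∈ k^× with L3 = λ·L1 and L4 = λ⁻¹·L2 — if and only if b² = μ·ac. -/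
/-- A nonzero quadratic form `Q = a·z1² + 2b·z1z2 + c·z2²` factors uniquely up
to a nonzero scalar multiple if and only if `b² = μ·ac`. -/
theorem uniqueFactorization_iff {k : Type*} [Field k] [IsAlgClosed k]
    (h2 : (2 : k) ≠ 0) (μ : k) (hμ : μ ≠ 0) (a b c : k)
    (hQ : (a, b, c) ≠ (0, 0, 0)) :
    (∀ L1 L2 L3 L4 : k × k,
        IsFactorization μ a b c L1 L2 → IsFactorization μ a b c L3 L4 →
        ∃ lam : k, lam ≠ 0 ∧ L3 = lam • L1 ∧ L4 = lam⁻¹ • L2) ↔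
      b ^ 2 = μ * a * c := by
  constructor
  · intro H
    by_contra hne
    rcases eq_or_ne a 0 with ha | ha
    · subst ha
      have hb : b ≠ 0 := by
        intro h; exact hne (by simp [h])
      have f1 : IsFactorization μ 0 b c (0, 1) (2 * b / μ, c) := by
        refine ⟨by ring, ?_, by ring⟩
        field_simp
        ring
      have f2 : IsFactorization μ 0 b c (1, c / (2 * b)) (0, 2 * b) := by
        refine ⟨by ring, ?_, ?_⟩ <;> field_simp <;> ring
      obtain ⟨lam, hlam, h3, h4⟩ := H _ _ _ _ f1 f2
      have := congrArg Prod.fst h3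
      simp [smul_eq_mul] at this
    · obtain ⟨d, hd⟩ := IsAlgClosed.exists_pow_nat_eq (b ^ 2 - μ * a * c) (n := 2) (by norm_num)
      have hd0 : d ≠ 0 := by
        intro h
        apply hne
        rw [h] at hd
        linear_combination -hd
      have f1 : IsFactorization μ a b c (a, (b - d) / μ) (1, (b + d) / a) := by
        refine ⟨by ring, ?_, ?_⟩ <;> field_simp <;>
          first
          | linear_combination hd
          | linear_combination -hd
          | linear_combination 2 * hd
          | linear_combination -2 * hd
          | ring
      have f2 : IsFactorization μ a b c (a, (b + d) / μ) (1, (b - d) / a) := by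
        refine ⟨by ring, ?_, ?_⟩ <;> field_simp <;>
          first
          | linear_combination hd
          | linear_combination -hd
          | linear_combination 2 * hd
          | linear_combination -2 * hd
          | ring
      obtain ⟨lam, hlam, h3, h4⟩ := H _ _ _ _ f1 f2
      have e1 := congrArg Prod.fst h3
      have e2 := congrArg Prod.snd h3
      simp only [Prod.smul_fst, Prod.smul_snd, smul_eq_mul] at e1 e2
      have hl1 : lam = 1 := by
        have := mul_right_cancel₀ ha (by linear_combination -e1 : lam * a = 1 * a)
        exact this
      rw [hl1, one_mul] at e2
      have hd' : d = 0 := by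
        field_simp at e2
        have h2d : 2 * d = 0 := by linear_combination e2
        exact (mul_eq_zero.mp h2d).resolve_left h2
      exact hd0 hd'
  · intro hb L1 L2 L3 L4 h1 h2'
    obtain ⟨hp, hm, hc⟩ := h1
    obtain ⟨hp', hm', hc'⟩ := h2'
    have hxy : L1.1 * L2.2 * (μ * L1.2 * L2.1) = b ^ 2 := by
      linear_combination μ * L2.2 * L1.2 * hp + μ * a * hc - hb
    have hX : L1.1 * L2.2 = b := by
      have hx : (L1.1 * L2.2 - b) ^ 2 = 0 := by
        linear_combination L1.1 * L2.2 * hm - hxy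
      have := pow_eq_zero_iff (two_ne_zero) |>.mp hx
      linear_combination this
    have hY : μ * L1.2 * L2.1 = b := by linear_combination hm - hX
    have hxy' : L3.1 * L4.2 * (μ * L3.2 * L4.1) = b ^ 2 := by
      linear_combination μ * L4.2 * L3.2 * hp' + μ * a * hc' - hb
    have hX' : L3.1 * L4.2 = b := by
      have hx' : (L3.1 * L4.2 - b) ^ 2 = 0 := by
        linear_combination L3.1 * L4.2 * hm' - hxy'
      have := pow_eq_zero_iff (two_ne_zero) |>.mp hx'
      linear_combination this
    have hY' : μ * L3.2 * L4.1 = b := by linear_combination hm' - hX'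
    rcases eq_or_ne a 0 with ha | ha
    · have hcne : c ≠ 0 := by
        intro hcz
        apply hQ
        have hb0 : b = 0 := by
          have : b ^ 2 = 0 := by rw [hb, ha, hcz]; ring
          exact pow_eq_zero_iff (two_ne_zero) |>.mp this
        simp [ha, hb0, hcz]
      have h12 : L1.2 ≠ 0 := fun h => hcne (by rw [← hc, h]; ring)
      have h22 : L2.2 ≠ 0 := fun h => hcne (by rw [← hc, h]; ring)
      have h32 : L3.2 ≠ 0 := fun h => hcne (by rw [← hc', h]; ring)
      have h42 : L4.2 ≠ 0 := fun h => hcne (by rw [← hc', h]; ring)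
      refine ⟨L3.2 / L1.2, div_ne_zero h32 h12, ?_, ?_⟩
      · refine Prod.ext ?_ ?_ <;> simp only [Prod.smul_fst, Prod.smul_snd, smul_eq_mul]
        · rw [div_mul_eq_mul_div, eq_comm, div_eq_iff h12, eq_comm]
          refine mul_right_cancel₀ (mul_ne_zero h22 h42) ?_
          linear_combination L1.2 * L2.2 * hX' - L1.1 * L2.2 * hc' + b * hc - c * hX
        · rw [div_mul_eq_mul_div, eq_comm, div_eq_iff h12]
      · refine Prod.ext ?_ ?_ <;> simp only [Prod.smul_fst, Prod.smul_snd, smul_eq_mul]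
        · rw [inv_div, div_mul_eq_mul_div, eq_comm, div_eq_iff h32, eq_comm]
          refine mul_left_cancel₀ hμ ?_
          linear_combination hY' - hY
        · rw [inv_div, div_mul_eq_mul_div, eq_comm, div_eq_iff h32, eq_comm]
          linear_combination hc' - hc
    · have h11 : L1.1 ≠ 0 := fun h => ha (by rw [← hp, h]; ring)
      have h21 : L2.1 ≠ 0 := fun h => ha (by rw [← hp, h]; ring)
      have h31 : L3.1 ≠ 0 := fun h => ha (by rw [← hp', h]; ring)
      have h41 : L4.1 ≠ 0 := fun h => ha (by rw [← hp', h]; ring)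
      refine ⟨L3.1 / L1.1, div_ne_zero h31 h11, ?_, ?_⟩
      · refine Prod.ext ?_ ?_ <;> simp only [Prod.smul_fst, Prod.smul_snd, smul_eq_mul]
        · rw [div_mul_eq_mul_div, eq_comm, div_eq_iff h11]
        · rw [div_mul_eq_mul_div, eq_comm, div_eq_iff h11, eq_comm]
          refine mul_right_cancel₀ (mul_ne_zero hμ (mul_ne_zero h21 h41)) ?_
          linear_combination L1.1 * L2.1 * hY' - L3.1 * L4.1 * hY + b * hp - b * hp'
      · refine Prod.ext ?_ ?_ <;> simp only [Prod.smul_fst, Prod.smul_snd, smul_eq_mul]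
        · rw [inv_div, div_mul_eq_mul_div, eq_comm, div_eq_iff h31, eq_comm]
          linear_combination hp' - hp
        · rw [inv_div, div_mul_eq_mul_div, eq_comm, div_eq_iff h31, eq_comm]
          linear_combination hX' - hX
end

section
/- Every quadratic form on three generators is a product plus a square: for all a, b, c, d, e, f ∈ k there exist degree-one elements L1, L2, L3 of S such that Q = L1·L2 + L3² in S; equivalently, there exist p1, p2, p3, q1, q2, q3, r1, r2, r3 ∈ k satisfying p1q1 + r1² = a, p2q2 + r2² = b, p3q3 + r3² = c, p1q2 + μ12·p2q1 + (1+μ12)·r1r2 = 2d, p1q3 + μ13·p3q1 + (1+μ13)·r1r3 = 2e, and p2q3 + μ23·p3q2 + (1+μ23)·r2r3 = 2f. -/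
/-!
Write `σ = μ13 + μ12 μ23`. With `L1 = z1 + p2 z2 + x z3`, `L2 = a z1 + q2 z2 + q3 z3` and
`L3 = r2 z2`, the equations reduce to the quadratic `μ13 a x² - 2e x + c = 0`, an equation for `p2`
that is linear with leading coefficient `2e - σ a x`, and `r2² = …`. So `Q` is a product plus a
square unless every root satisfies `σ a x = 2e`; with the same argument for `z2 ↔ z3`, and
`(d, e) ≠ 0`, this forces `μ12 μ23 = μ13`, `d² = μ12 a b` and `e² = μ13 a c`. Then
`Q = (z1 + u z2 + v z3)(a z1 + μ12 a u z2 + μ13 a v z3) + g z2 z3`, and moving the first factor to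
`z1 + (u + 1) z2 + (v + t) z3` while adding `(ρ2 z2 + ρ3 t z3)²`, with `ρ2² = μ12 a`, `ρ3² = μ13 a`,
keeps the diagonal and shifts the `z2 z3` coefficient by a nonzero multiple of `t`.
If `d = e = 0`, then `Q` is `a z1²` plus a binary form, which factors.
-/

theorem exists_quadratic_eq_zero_of_ne_zero_or_ne_zero {K : Type*} [Field K] [IsAlgClosed K]
    [NeZero (2 : K)] {a b : K} (c : K) (hab : a ≠ 0 ∨ b ≠ 0) :
    ∃ x, a * (x * x) + b * x + c = 0 := by
  by_cases ha : a = 0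
  · subst ha
    exact ⟨-c / b, by field_simp [hab.resolve_left (not_not.2 rfl)]; ring⟩
  · exact exists_quadratic_eq_zero ha (IsAlgClosed.exists_eq_mul_self _)

theorem exists_mul_self_eq_and_mul_ne {K : Type*} [Field K] [IsAlgClosed K] [NeZero (2 : K)]
    (s κ : K) {w : K} (hw : w ≠ 0) : ∃ ρ, s = ρ * ρ ∧ κ * ρ ≠ w := by
  obtain ⟨ρ, hρ⟩ := IsAlgClosed.exists_eq_mul_self s
  by_cases h : κ * ρ = w
  · refine ⟨-ρ, by rw [hρ]; ring, fun h' => hw ?_⟩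
    have : (2 : K) * w = 0 := by linear_combination -h' - h
    exact (mul_eq_zero.1 this).resolve_left two_ne_zero
  · exact ⟨ρ, hρ, h⟩

theorem exists_skew_binary_factorization {K : Type*} [Field K] [IsAlgClosed K]
    [NeZero (2 : K)] {μ : K} (hμ : μ ≠ 0) (b c f : K) :
    ∃ p2 p3 q2 q3 : K, p2 * q2 = b ∧ p3 * q3 = c ∧ p2 * q3 + μ * p3 * q2 = 2 * f := by
  by_cases hb : b = 0
  · exact ⟨2 * f, c, 0, 1, by rw [hb, mul_zero], mul_one c, by ring⟩
  · obtain ⟨x, hx⟩ := exists_quadratic_eq_zero (mul_ne_zero hμ hb)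
      (IsAlgClosed.exists_eq_mul_self (discrim (μ * b) (-(2 * f)) c))
    exact ⟨1, x, b, 2 * f - μ * b * x, one_mul b, by linear_combination -hx, by ring⟩

section

variable {k : Type*} [Field k]

def IsProductPlusSquare (μ12 μ13 μ23 a b c d e f : k) : Prop :=
  ∃ p1 p2 p3 q1 q2 q3 r1 r2 r3 : k,
    p1 * q1 + r1 ^ 2 = a ∧
    p2 * q2 + r2 ^ 2 = b ∧
    p3 * q3 + r3 ^ 2 = c ∧
    p1 * q2 + μ12 * p2 * q1 + (1 + μ12) * r1 * r2 = 2 * d ∧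
    p1 * q3 + μ13 * p3 * q1 + (1 + μ13) * r1 * r3 = 2 * e ∧
    p2 * q3 + μ23 * p3 * q2 + (1 + μ23) * r2 * r3 = 2 * f

namespace IsProductPlusSquare

variable {μ12 μ13 μ23 a b c d e f : k}

-- Listing the generators as `z1, z3, z2`: since `z2 z3 = μ23⁻¹ z3 z2`, `2f z2 z3 = 2(f / μ23) z3 z2`.
theorem of_swap (hμ23 : μ23 ≠ 0) (h : IsProductPlusSquare μ13 μ12 μ23⁻¹ a c b e d (f / μ23)) :
    IsProductPlusSquare μ12 μ13 μ23 a b c d e f := by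
  obtain ⟨p1, p2, p3, q1, q2, q3, r1, r2, r3, ha, hc, hb, he, hd, hf⟩ := h
  refine ⟨p1, p3, p2, q1, q3, q2, r1, r3, r2, ha, hb, hc, hd, he, ?_⟩
  field_simp at hf
  linear_combination hf

variable [IsAlgClosed k]

theorem of_root (x : k) (hx : μ13 * a * (x * x) + -(2 * e) * x + c = 0)
    (hM : (μ13 + μ12 * μ23) * a * x ≠ 2 * e) :
    IsProductPlusSquare μ12 μ13 μ23 a b c d e f := by
  obtain ⟨p2, hp2⟩ : ∃ p2, p2 * (2 * e - (μ13 + μ12 * μ23) * a * x) = 2 * f - 2 * μ23 * d * x :=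
    ⟨_, div_mul_cancel₀ _ (sub_ne_zero.2 hM.symm)⟩
  obtain ⟨r2, hr2⟩ := IsAlgClosed.exists_eq_mul_self (b - p2 * (2 * d - μ12 * a * p2))
  exact ⟨1, p2, x, a, 2 * d - μ12 * a * p2, 2 * e - μ13 * a * x, 0, r2, 0,
    by ring, by linear_combination -hr2, by linear_combination -hx, by ring, by ring,
    by linear_combination hp2⟩

variable [NeZero (2 : k)]

theorem of_d_eq_zero_of_e_eq_zero (hμ23 : μ23 ≠ 0) :
    IsProductPlusSquare μ12 μ13 μ23 a b c 0 0 f := by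
  obtain ⟨r1, hr1⟩ := IsAlgClosed.exists_eq_mul_self a
  obtain ⟨p2, p3, q2, q3, hb, hc, hf⟩ := exists_skew_binary_factorization hμ23 b c f
  exact ⟨0, p2, p3, 0, q2, q3, r1, 0, 0, by linear_combination -hr1, by linear_combination hb,
    by linear_combination hc, by ring, by ring, by linear_combination hf⟩

theorem of_mul_eq_zero (he : e ≠ 0) (hσa : (μ13 + μ12 * μ23) * a = 0) :
    IsProductPlusSquare μ12 μ13 μ23 a b c d e f := by
  have h2e : 2 * e ≠ 0 := mul_ne_zero two_ne_zero he
  obtain ⟨x, hx⟩ := exists_quadratic_eq_zero_of_ne_zero_or_ne_zero c (Or.inr (neg_ne_zero.2 h2e))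
  exact of_root x hx (by rw [hσa, zero_mul]; exact h2e.symm)

theorem of_sq_eq (hμ13 : μ13 ≠ 0) (ha : a ≠ 0) (hμ : μ12 * μ23 = μ13) (u v : k) :
    IsProductPlusSquare μ12 μ13 μ23 a (μ12 * a * u ^ 2) (μ13 * a * v ^ 2) (μ12 * a * u)
      (μ13 * a * v) f := by
  obtain ⟨ρ2, hρ2⟩ := IsAlgClosed.exists_eq_mul_self (μ12 * a)
  obtain ⟨ρ3, hρ3, hκ⟩ := exists_mul_self_eq_and_mul_ne (μ13 * a) ((1 + μ23) * ρ2)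
    (mul_ne_zero (mul_ne_zero two_ne_zero hμ13) ha)
  obtain ⟨t, ht⟩ : ∃ t, t * ((1 + μ23) * ρ2 * ρ3 - 2 * μ13 * a) = 2 * f - 2 * μ13 * a * u * v :=
    ⟨_, div_mul_cancel₀ _ (sub_ne_zero.2 hκ)⟩
  exact ⟨1, u + 1, v + t, a, μ12 * a * (u - 1), μ13 * a * (v - t), 0, ρ2, ρ3 * t,
    by ring, by linear_combination -hρ2, by linear_combination -t ^ 2 * hρ3, by ring, by ring,
    by linear_combination ht + a * (v + t) * (u - 1) * hμ⟩

end IsProductPlusSquare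

variable [IsAlgClosed k] [NeZero (2 : k)] {μ12 μ13 μ23 a b c d e f : k}

theorem sq_eq_and_mul_eq_zero_of_not_isProductPlusSquare (hμ13 : μ13 ≠ 0) (ha : a ≠ 0)
    (hσ : μ13 + μ12 * μ23 ≠ 0) (h : ¬IsProductPlusSquare μ12 μ13 μ23 a b c d e f) :
    e ^ 2 = μ13 * a * c ∧ e * (μ12 * μ23 - μ13) = 0 := by
  have hA : μ13 * a ≠ 0 := mul_ne_zero hμ13 ha
  have hroot : ∀ x, μ13 * a * (x * x) + -(2 * e) * x + c = 0 →
      (μ13 + μ12 * μ23) * a * x = 2 * e :=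
    fun x hx => not_not.1 fun hM => h (.of_root x hx hM)
  obtain ⟨x, hx⟩ := exists_quadratic_eq_zero hA (IsAlgClosed.exists_eq_mul_self _)
  have hdisc : discrim (μ13 * a) (-(2 * e)) c = 0 :=
    discrim_eq_zero_of_existsUnique hA ⟨x, hx, fun y hy =>
      mul_left_cancel₀ (mul_ne_zero hσ ha) ((hroot y hy).trans (hroot x hx).symm)⟩
  have hvertex : μ13 * a * x = e := by
    rw [(quadratic_eq_zero_iff_of_discrim_eq_zero hA hdisc x).1 hx]
    field_simp
  constructor
  · linear_combination -μ13 * a * hx + (μ13 * a * x - e) * hvertex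
  · linear_combination μ13 * hroot x hx - (μ13 + μ12 * μ23) * hvertex

theorem isProductPlusSquare_of_ne_zero_or_ne_zero (hμ12 : μ12 ≠ 0) (hμ13 : μ13 ≠ 0)
    (hμ23 : μ23 ≠ 0) (hde : d ≠ 0 ∨ e ≠ 0) : IsProductPlusSquare μ12 μ13 μ23 a b c d e f := by
  have hσ' : μ12 + μ13 * μ23⁻¹ = (μ13 + μ12 * μ23) * μ23⁻¹ := by field_simp; ring
  by_cases hσa : (μ13 + μ12 * μ23) * a = 0
  · rcases hde with hd | he
    · exact .of_swap hμ23 (.of_mul_eq_zero hd (by rw [hσ']; linear_combination μ23⁻¹ * hσa))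
    · exact .of_mul_eq_zero he hσa
  obtain ⟨hσ, ha⟩ := mul_ne_zero_iff.1 hσa
  by_contra h
  obtain ⟨hc, he⟩ := sq_eq_and_mul_eq_zero_of_not_isProductPlusSquare hμ13 ha hσ h
  obtain ⟨hb, hd⟩ := sq_eq_and_mul_eq_zero_of_not_isProductPlusSquare hμ12 ha
    (by rw [hσ']; exact mul_ne_zero hσ (inv_ne_zero hμ23)) fun h' => h (.of_swap hμ23 h')
  have hμ : μ12 * μ23 = μ13 := by
    rcases hde with hd0 | he0
    · have h' := (mul_eq_zero.1 hd).resolve_left hd0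
      field_simp at h'
      linear_combination -h'
    · linear_combination (mul_eq_zero.1 he).resolve_left he0
  obtain ⟨u, rfl⟩ : ∃ u, d = μ12 * a * u := ⟨d / (μ12 * a), by field_simp⟩
  obtain ⟨v, rfl⟩ : ∃ v, e = μ13 * a * v := ⟨e / (μ13 * a), by field_simp⟩
  obtain rfl : b = μ12 * a * u ^ 2 :=
    mul_left_cancel₀ (mul_ne_zero hμ12 ha) (by linear_combination -hb)
  obtain rfl : c = μ13 * a * v ^ 2 :=
    mul_left_cancel₀ (mul_ne_zero hμ13 ha) (by linear_combination -hc)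
  exact h (.of_sq_eq hμ13 ha hμ u v)

end

/-- Every quadratic form
`Q = a·z1² + b·z2² + c·z3² + 2d·z1z2 + 2e·z1z3 + 2f·z2z3` on three generators
of the skew polynomial algebra `S` (relations `zj·zi = μij·zi·zj` for `i < j`)
can be written as `Q = L1·L2 + L3²` with `L1, L2, L3` degree one; equivalently,
the coefficient equations below have a solution, where
`L1 = p1·z1 + p2·z2 + p3·z3`, `L2 = q1·z1 + q2·z2 + q3·z3`,
`L3 = r1·z1 + r2·z2 + r3·z3`. -/
theorem productPlusSquare {k : Type*} [Field k] [IsAlgClosed k]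
    (h2 : (2 : k) ≠ 0) (μ12 μ13 μ23 : k)
    (hμ12 : μ12 ≠ 0) (hμ13 : μ13 ≠ 0) (hμ23 : μ23 ≠ 0)
    (a b c d e f : k) :
    ∃ p1 p2 p3 q1 q2 q3 r1 r2 r3 : k,
      p1 * q1 + r1 ^ 2 = a ∧
      p2 * q2 + r2 ^ 2 = b ∧
      p3 * q3 + r3 ^ 2 = c ∧
      p1 * q2 + μ12 * p2 * q1 + (1 + μ12) * r1 * r2 = 2 * d ∧
      p1 * q3 + μ13 * p3 * q1 + (1 + μ13) * r1 * r3 = 2 * e ∧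
      p2 * q3 + μ23 * p3 * q2 + (1 + μ23) * r2 * r3 = 2 * f := by
  have : NeZero (2 : k) := ⟨h2⟩
  by_cases hde : d = 0 ∧ e = 0
  · obtain ⟨rfl, rfl⟩ := hde
    exact IsProductPlusSquare.of_d_eq_zero_of_e_eq_zero hμ23
  · exact isProductPlusSquare_of_ne_zero_or_ne_zero hμ12 hμ13 hμ23 (not_and_or.1 hde)
end

section
/- A quadratic form on three generators is a perfect square exactly when all six 2×2 μ-minors vanish: there exists a degree-one element L of S with Q = L² (equivalently, there exist r1, r2, r3 ∈ k with r1² = a, r2² = b, r3² = c, (1+μ12)·r1r2 = 2d, (1+μ13)·r1r3 = 2e, (1+μ23)·r2r3 = 2f) if and only if D1(M) = D2(M) = D3(M) = D4(M) = D5(M) = D6(M) = 0. -/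
/-- A quadratic form
`Q = a·z1² + b·z2² + c·z3² + 2d·z1z2 + 2e·z1z3 + 2f·z2z3` on three generators
of the skew polynomial algebra `S` (relations `zj·zi = μij·zi·zj` for `i < j`)
is a perfect square `Q = L²` with `L = r1·z1 + r2·z2 + r3·z3` (equivalently,
the coefficient equations below hold) if and only if all six `2×2` μ-minors
`D1(M), ..., D6(M)` of the associated μ-symmetric matrix `M` vanish. -/
theorem perfectSquare_iff_muMinors_vanish {k : Type*} [Field k] [IsAlgClosed k]
    (h2 : (2 : k) ≠ 0) (μ12 μ13 μ23 : k)
    (hμ12 : μ12 ≠ 0) (hμ13 : μ13 ≠ 0) (hμ23 : μ23 ≠ 0)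
    (a b c d e f : k) :
    (∃ r1 r2 r3 : k,
        r1 ^ 2 = a ∧ r2 ^ 2 = b ∧ r3 ^ 2 = c ∧
        (1 + μ12) * r1 * r2 = 2 * d ∧
        (1 + μ13) * r1 * r3 = 2 * e ∧
        (1 + μ23) * r2 * r3 = 2 * f) ↔
      (4 * d ^ 2 - (1 + μ12) ^ 2 * a * b = 0 ∧
       4 * e ^ 2 - (1 + μ13) ^ 2 * a * c = 0 ∧
       4 * f ^ 2 - (1 + μ23) ^ 2 * b * c = 0 ∧
       2 * (1 + μ23) * d * e - (1 + μ12) * (1 + μ13) * a * f = 0 ∧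
       2 * (1 + μ12) * e * f - (1 + μ13) * (1 + μ23) * c * d = 0 ∧
       2 * (1 + μ13) * d * f - (1 + μ12) * (1 + μ23) * b * e = 0) := by
  constructor
  · rintro ⟨r1, r2, r3, ha, hb, hc, hd, he, hf⟩
    subst ha hb hc
    have hd' : d = (1 + μ12) * r1 * r2 / 2 := by field_simp; linear_combination -hd
    have he' : e = (1 + μ13) * r1 * r3 / 2 := by field_simp; linear_combination -he
    have hf' : f = (1 + μ23) * r2 * r3 / 2 := by field_simp; linear_combination -hf
    subst hd' he' hf'
    refine ⟨by field_simp; ring, by field_simp; ring, by field_simp; ring,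
      by field_simp; ring, by field_simp; ring, by field_simp; ring⟩
  · rintro ⟨h1, hh2, h3, h4, h5, h6⟩
    have h4ne : (4 : k) ≠ 0 := by
      intro h; apply h2; have : (2 : k) * 2 = 0 := by linear_combination h
      rcases mul_eq_zero.mp this with h | h <;> exact h
    by_cases ha : a = 0
    · -- a = 0 forces d = e = 0
      have hd0 : d = 0 := by
        have hsq : d ^ 2 = 0 := by
          have : (4 : k) * d ^ 2 = 0 := by rw [ha] at h1; linear_combination h1
          exact (mul_eq_zero.mp this).resolve_left h4ne
        exact pow_eq_zero_iff (n := 2) (by norm_num) |>.mp hsq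
      have he0 : e = 0 := by
        have hsq : e ^ 2 = 0 := by
          have : (4 : k) * e ^ 2 = 0 := by rw [ha] at hh2; linear_combination hh2
          exact (mul_eq_zero.mp this).resolve_left h4ne
        exact pow_eq_zero_iff (n := 2) (by norm_num) |>.mp hsq
      obtain ⟨r2, hr2⟩ := IsAlgClosed.exists_pow_nat_eq (k := k) b zero_lt_two
      obtain ⟨r3, hr3⟩ := IsAlgClosed.exists_pow_nat_eq (k := k) c zero_lt_two
      have hprod : ((1 + μ23) * r2 * r3 - 2 * f) * ((1 + μ23) * r2 * r3 + 2 * f) = 0 := by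
        linear_combination (1 + μ23) ^ 2 * r3 ^ 2 * hr2 + (1 + μ23) ^ 2 * b * hr3 - h3
      rcases mul_eq_zero.mp hprod with hp | hp
      · exact ⟨0, r2, r3, by rw [ha]; ring, hr2, hr3,
          by rw [hd0]; ring, by rw [he0]; ring, by linear_combination hp⟩
      · exact ⟨0, r2, -r3, by rw [ha]; ring, hr2, by rw [← hr3]; ring,
          by rw [hd0]; ring, by rw [he0]; ring, by linear_combination -hp⟩
    · obtain ⟨r1, hr1⟩ := IsAlgClosed.exists_pow_nat_eq (k := k) a zero_lt_two
      have hr1ne : r1 ≠ 0 := by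
        intro h; apply ha; rw [← hr1, h]; ring
      by_cases hα : (1 + μ12) = 0
      · -- then d = 0
        have hd0 : d = 0 := by
          have hsq : d ^ 2 = 0 := by
            have : (4 : k) * d ^ 2 = 0 := by rw [hα] at h1; linear_combination h1
            exact (mul_eq_zero.mp this).resolve_left h4ne
          exact pow_eq_zero_iff (n := 2) (by norm_num) |>.mp hsq
        obtain ⟨r2, hr2⟩ := IsAlgClosed.exists_pow_nat_eq (k := k) b zero_lt_two
        by_cases hβ : (1 + μ13) = 0
        · have he0 : e = 0 := by
            have hsq : e ^ 2 = 0 := by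
              have : (4 : k) * e ^ 2 = 0 := by rw [hβ] at hh2; linear_combination hh2
              exact (mul_eq_zero.mp this).resolve_left h4ne
            exact pow_eq_zero_iff (n := 2) (by norm_num) |>.mp hsq
          obtain ⟨r3, hr3⟩ := IsAlgClosed.exists_pow_nat_eq (k := k) c zero_lt_two
          have hprod : ((1 + μ23) * r2 * r3 - 2 * f) * ((1 + μ23) * r2 * r3 + 2 * f) = 0 := by
            linear_combination (1 + μ23) ^ 2 * r3 ^ 2 * hr2 + (1 + μ23) ^ 2 * b * hr3 - h3
          rcases mul_eq_zero.mp hprod with hp | hp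
          · exact ⟨r1, r2, r3, hr1, hr2, hr3, by rw [hα, hd0]; ring,
              by rw [hβ, he0]; ring, by linear_combination hp⟩
          · exact ⟨r1, r2, -r3, hr1, hr2, by rw [← hr3]; ring, by rw [hα, hd0]; ring,
              by rw [hβ, he0]; ring, by linear_combination -hp⟩
        · set r3 := 2 * e / ((1 + μ13) * r1) with hr3def
          have hr3 : r3 ^ 2 = c := by
            rw [hr3def, div_pow, div_eq_iff (pow_ne_zero 2 (mul_ne_zero hβ hr1ne))]
            linear_combination hh2 - c * (1 + μ13) ^ 2 * hr1
          have hecond : (1 + μ13) * r1 * r3 = 2 * e := by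
            rw [hr3def]; field_simp
          have hprod : ((1 + μ23) * r2 * r3 - 2 * f) * ((1 + μ23) * r2 * r3 + 2 * f) = 0 := by
            linear_combination (1 + μ23) ^ 2 * r3 ^ 2 * hr2 + (1 + μ23) ^ 2 * b * hr3 - h3
          rcases mul_eq_zero.mp hprod with hp | hp
          · exact ⟨r1, r2, r3, hr1, hr2, hr3, by rw [hα, hd0]; ring,
              hecond, by linear_combination hp⟩
          · exact ⟨r1, -r2, r3, hr1, by rw [← hr2]; ring, hr3, by rw [hα, hd0]; ring,
              hecond, by linear_combination -hp⟩
      · set r2 := 2 * d / ((1 + μ12) * r1) with hr2def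
        have hr2 : r2 ^ 2 = b := by
          rw [hr2def, div_pow, div_eq_iff (pow_ne_zero 2 (mul_ne_zero hα hr1ne))]
          linear_combination h1 - b * (1 + μ12) ^ 2 * hr1
        have hdcond : (1 + μ12) * r1 * r2 = 2 * d := by
          rw [hr2def]; field_simp
        by_cases hβ : (1 + μ13) = 0
        · have he0 : e = 0 := by
            have hsq : e ^ 2 = 0 := by
              have : (4 : k) * e ^ 2 = 0 := by rw [hβ] at hh2; linear_combination hh2
              exact (mul_eq_zero.mp this).resolve_left h4ne
            exact pow_eq_zero_iff (n := 2) (by norm_num) |>.mp hsq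
          obtain ⟨r3, hr3⟩ := IsAlgClosed.exists_pow_nat_eq (k := k) c zero_lt_two
          have hprod : ((1 + μ23) * r2 * r3 - 2 * f) * ((1 + μ23) * r2 * r3 + 2 * f) = 0 := by
            linear_combination (1 + μ23) ^ 2 * r3 ^ 2 * hr2 + (1 + μ23) ^ 2 * b * hr3 - h3
          rcases mul_eq_zero.mp hprod with hp | hp
          · exact ⟨r1, r2, r3, hr1, hr2, hr3, hdcond,
              by rw [hβ, he0]; ring, by linear_combination hp⟩
          · exact ⟨r1, r2, -r3, hr1, hr2, by rw [← hr3]; ring, hdcond,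
              by rw [hβ, he0]; ring, by linear_combination -hp⟩
        · set r3 := 2 * e / ((1 + μ13) * r1) with hr3def
          have hr3 : r3 ^ 2 = c := by
            rw [hr3def, div_pow, div_eq_iff (pow_ne_zero 2 (mul_ne_zero hβ hr1ne))]
            linear_combination hh2 - c * (1 + μ13) ^ 2 * hr1
          have hecond : (1 + μ13) * r1 * r3 = 2 * e := by
            rw [hr3def]; field_simp
          have hfcond : (1 + μ23) * r2 * r3 = 2 * f := by
            rw [hr2def, hr3def]; field_simp
            linear_combination (-1) * (1 + μ12) * (1 + μ13) * f * hr1 + h4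
          exact ⟨r1, r2, r3, hr1, hr2, hr3, hdcond, hecond, hfcond⟩
end

section
/- Suppose μ13 = μ12·μ23 (the twist case, where S is a twist of the polynomial ring by a graded automorphism). Then D7(M) = (μ23·cd² − 2def + be²)² and, for any X, Y ∈ k with X² = d² − μ12·ab and Y² = e² − μ13·ac, D8(M) = 2·(μ21·(de − XY) − af). -/
/-- In the twist case `μ13 = μ12·μ23` (where `S` is a twist of the polynomial
ring by a graded automorphism), the μ-determinants simplify:
`D7(M) = (μ23·cd² − 2def + be²)²` and, for any square roots `X, Y` with
`X² = d² − μ12·ab` and `Y² = e² − μ13·ac`,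
`D8(M) = 2·(μ21·(de − XY) − af)`. -/
theorem twistCase_D7_D8 {k : Type*} [Field k] (h2 : (2 : k) ≠ 0)
    (μ12 μ13 μ23 : k) (hμ12 : μ12 ≠ 0) (hμ13 : μ13 ≠ 0) (hμ23 : μ23 ≠ 0)
    (htwist : μ13 = μ12 * μ23) (a b c d e f : k) :
    ((μ23 * c * d ^ 2 - 2 * d * e * f + b * e ^ 2) *
        (μ13 * μ12⁻¹ * c * d ^ 2 - 2 * d * e * f +
          μ12 * μ23 * μ13⁻¹ * b * e ^ 2) =
      (μ23 * c * d ^ 2 - 2 * d * e * f + b * e ^ 2) ^ 2) ∧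
    (∀ X Y : k, X ^ 2 = d ^ 2 - μ12 * a * b → Y ^ 2 = e ^ 2 - μ13 * a * c →
      μ12⁻¹ * (d + X) * (e - Y) + μ23 * μ13⁻¹ * (d - X) * (e + Y)
          - 2 * a * f =
        2 * (μ12⁻¹ * (d * e - X * Y) - a * f)) := by
  subst htwist
  constructor
  · field_simp
  · intro X Y _ _
    field_simp
    ring
end
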